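/- There exists a constant c > 0 such that for every n ≥ 2 and any two HC trees T₁ and T₂ of order n, idist(T₁,T₂) ≤ c · n · log n. -/

import Mathlib

/-- A (rooted, full) binary tree with leaves labeled by elements of `α`. -/
inductive HCTree (α : Type) : Type
  | leaf : α → HCTree α
  | node : HCTree α → HCTree α → HCTree α
  deriving DecidableEq

namespace HCTree

variable {α : Type} [DecidableEq α]

/-- The set of leaf labels of a tree. -/
def leaves : HCTree α → Finset α
  | leaf a => {a}
  | node l r => leaves l ∪ leaves r

/-- The tree is a valid HC tree: all leaf labels are pairwise distinct. -/
def Proper : HCTree α → Prop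
  | leaf _ => True
  | node l r => Proper l ∧ Proper r ∧ Disjoint (leaves l) (leaves r)

/-- The number of leaves of the subtree rooted at the lowest common ancestor
of the leaves `i` and `j` (i.e. `|T_{i,j}|`). -/
def lcaSize : HCTree α → α → α → ℕ
  | leaf _, _, _ => 1
  | node l r, i, j =>
      if i ∈ leaves l ∧ j ∈ leaves l then lcaSize l i j
      else if i ∈ leaves r ∧ j ∈ leaves r then lcaSize r i j
      else (leaves l ∪ leaves r).card

/-- `Σ_{i<j, i,j ∈ L} w i j`. -/
noncomputable def pairsSum [LinearOrder α] (w : α → α → ℝ) (L : Finset α) : ℝ :=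
  ∑ i ∈ L, ∑ j ∈ L, if i < j then w i j else 0

/-- Moseley–Wang revenue of `T` with respect to its own leaf set:
`rev(T) = Σ_{i<j} w(i,j) (|L| - |T_{i,j}|)`. -/
noncomputable def rev [LinearOrder α] (w : α → α → ℝ) (T : HCTree α) : ℝ :=
  ∑ i ∈ T.leaves, ∑ j ∈ T.leaves,
    if i < j then w i j * ((T.leaves.card : ℝ) - (T.lcaSize i j : ℝ)) else 0

/-- Dasgupta cost: `cost(T) = Σ_{i<j} w(i,j) |T_{i,j}|`. -/
noncomputable def cost [LinearOrder α] (w : α → α → ℝ) (T : HCTree α) : ℝ :=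
  ∑ i ∈ T.leaves, ∑ j ∈ T.leaves,
    if i < j then w i j * (T.lcaSize i j : ℝ) else 0

/-- `w(A,B) = Σ_{i∈A, j∈B} w(i,j)`. -/
noncomputable def wSet (w : α → α → ℝ) (A B : Finset α) : ℝ := ∑ i ∈ A, ∑ j ∈ B, w i j

/-- One-hole contexts for `HCTree`. -/
inductive Ctx (α : Type) : Type
  | hole : Ctx α
  | nodeL : Ctx α → HCTree α → Ctx α
  | nodeR : HCTree α → Ctx α → Ctx α

/-- Filling the hole of a context with a tree. -/
def Ctx.fill {α : Type} : Ctx α → HCTree α → HCTree α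
  | Ctx.hole, T => T
  | Ctx.nodeL K r, T => node (Ctx.fill K T) r
  | Ctx.nodeR l K, T => node l (Ctx.fill K T)

/-- Equality of HC trees as *unordered* trees (children of a node are unordered). -/
inductive TEq : HCTree α → HCTree α → Prop
  | leaf (a : α) : TEq (leaf a) (leaf a)
  | node {l r l' r' : HCTree α} : TEq l l' → TEq r r' → TEq (node l r) (node l' r')
  | swap {l r l' r' : HCTree α} : TEq l r' → TEq r l' → TEq (node l r) (node l' r')

/-- `T'` is obtained from `T` by a single interchange operation: at an edge `(x,y)`
where `x` is internal with parent `y`, the subtrees rooted at the children of `x`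
have leaf sets `A` and `B`, and the other child of `y` has leaf set `C`; the
operation swaps the `B`-subtree with the `C`-subtree, or the `A`-subtree with
the `C`-subtree. -/
def Interchange {α : Type} (T T' : HCTree α) : Prop :=
  ∃ (K : Ctx α) (A B C : HCTree α),
    T = K.fill (node (node A B) C) ∧
    (T' = K.fill (node (node A C) B) ∨ T' = K.fill (node (node C B) A))

/-- `T` is locally optimal: no interchange, performed on any presentation `S` of
`T` as an unordered tree, strictly increases the revenue. -/
def LocalOpt [LinearOrder α] (w : α → α → ℝ) (T : HCTree α) : Prop :=
  ∀ S S' : HCTree α, TEq T S → Interchange S S' → rev w S' ≤ rev w T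

/-- One step of local search: an interchange, up to unordered-tree equality. -/
def IStep (T T' : HCTree α) : Prop :=
  ∃ S S' : HCTree α, TEq T S ∧ Interchange S S' ∧ TEq S' T'

/-- The interchange distance: minimum number of interchange operations needed to
convert `T₁` into `T₂` (as unordered trees). -/
noncomputable def idist (T₁ T₂ : HCTree α) : ℕ :=
  sInf {k : ℕ | ∃ f : ℕ → HCTree α, f 0 = T₁ ∧ TEq (f k) T₂ ∧
    ∀ i < k, IStep (f i) (f (i + 1))}

/-- The total cost of all merges of `T`: the sum over internal nodes, with
children leaf sets `A`, `B`, of `(|A|+|B|)·w(A,B)`. -/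
noncomputable def mergeCostSum (w : α → α → ℝ) : HCTree α → ℝ
  | leaf _ => 0
  | node l r => mergeCostSum w l + mergeCostSum w r
      + ((l.leaves.card : ℝ) + (r.leaves.card : ℝ)) * wSet w l.leaves r.leaves

/-- The total revenue of all merges of `T` in a tree of order `n`: the sum over
internal nodes, with children leaf sets `A`, `B`, of `(n-|A|-|B|)·w(A,B)`. -/
noncomputable def mergeRevSum (w : α → α → ℝ) (n : ℕ) : HCTree α → ℝ
  | leaf _ => 0
  | node l r => mergeRevSum w n l + mergeRevSum w n r
      + ((n : ℝ) - (l.leaves.card : ℝ) - (r.leaves.card : ℝ)) * wSet w l.leaves r.leaves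

/-- Average similarity between two clusters. -/
noncomputable def sim (w : α → α → ℝ) (A B : Finset α) : ℝ :=
  wSet w A B / ((A.card : ℝ) * (B.card : ℝ))

/-- The forests (partial hierarchies) reachable by the average link algorithm:
start from singletons, and repeatedly merge two clusters of maximal average
similarity. -/
inductive AvgLinkForest [Fintype α] (w : α → α → ℝ) : Finset (HCTree α) → Prop
  | init : AvgLinkForest w (Finset.univ.image (leaf : α → HCTree α))
  | merge {F : Finset (HCTree α)} {A B : HCTree α} :
      AvgLinkForest w F → A ∈ F → B ∈ F → A ≠ B →
      (∀ X ∈ F, ∀ Y ∈ F, X ≠ Y → sim w X.leaves Y.leaves ≤ sim w A.leaves B.leaves) →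
      AvgLinkForest w (insert (node A B) ((F.erase A).erase B))

/-- `T` is produced by some execution of the average link algorithm. -/
def AvgLinkTree [Fintype α] (w : α → α → ℝ) (T : HCTree α) : Prop :=
  AvgLinkForest w {T}

end HCTree
namespace HCTree
set_option linter.unusedSectionVars false
variable {α : Type} [DecidableEq α]

-- ===================== new material =====================

theorem TEq.rfl : ∀ {T : HCTree α}, TEq T T := by
  intro T; induction T with
  | leaf a => exact .leaf a
  | node l r ihl ihr => exact .node ihl ihr

theorem TEq.symm' {T U : HCTree α} (h : TEq T U) : TEq U T := by
  induction h with
  | leaf a => exact .leaf a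
  | node _ _ ihl ihr => exact .node ihl ihr
  | swap _ _ ihl ihr => exact .swap ihr ihl

theorem TEq.trans' {T U V : HCTree α} (h1 : TEq T U) (h2 : TEq U V) : TEq T V := by
  induction h1 generalizing V with
  | leaf a => exact h2
  | node _ _ ihl ihr =>
    cases h2 with
    | node h1 h2 => exact .node (ihl h1) (ihr h2)
    | swap h1 h2 => exact .swap (ihl h1) (ihr h2)
  | swap _ _ ihl ihr =>
    cases h2 with
    | node h1 h2 => exact .swap (ihl h2) (ihr h1)
    | swap h1 h2 => exact .node (ihl h2) (ihr h1)

theorem TEq.swap_children {l r : HCTree α} : TEq (HCTree.node l r) (HCTree.node r l) :=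
  .swap TEq.rfl TEq.rfl

def Ctx.comp {α : Type} : Ctx α → Ctx α → Ctx α
  | Ctx.hole, K' => K'
  | Ctx.nodeL K r, K' => Ctx.nodeL (Ctx.comp K K') r
  | Ctx.nodeR l K, K' => Ctx.nodeR l (Ctx.comp K K')

theorem Ctx.fill_comp {α : Type} (K K' : Ctx α) (T : HCTree α) :
    (K.comp K').fill T = K.fill (K'.fill T) := by
  induction K with
  | hole => rfl
  | nodeL K r ih => simp [Ctx.comp, Ctx.fill, ih]
  | nodeR l K ih => simp [Ctx.comp, Ctx.fill, ih]

theorem Interchange.fill {T T' : HCTree α} (K : Ctx α) (h : Interchange T T') :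
    Interchange (K.fill T) (K.fill T') := by
  obtain ⟨K', A, B, C, h1, h2⟩ := h
  refine ⟨K.comp K', A, B, C, ?_, ?_⟩
  · rw [Ctx.fill_comp, h1]
  · rcases h2 with h2 | h2
    · exact Or.inl (by rw [Ctx.fill_comp, h2])
    · exact Or.inr (by rw [Ctx.fill_comp, h2])

theorem Interchange.symm' {T T' : HCTree α} (h : Interchange T T') : Interchange T' T := by
  obtain ⟨K, A, B, C, h1, h2⟩ := h
  rcases h2 with h2 | h2
  · exact ⟨K, A, C, B, h2, Or.inl h1⟩
  · exact ⟨K, C, B, A, h2, Or.inr h1⟩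

theorem TEq.fill {T U : HCTree α} (K : Ctx α) (h : TEq T U) :
    TEq (K.fill T) (K.fill U) := by
  induction K with
  | hole => exact h
  | nodeL K r ih => exact .node ih .rfl
  | nodeR l K ih => exact .node .rfl ih

theorem IStep.teq_left {T T' U : HCTree α} (h : TEq T T') (hs : IStep T' U) : IStep T U := by
  obtain ⟨S, S', h1, h2, h3⟩ := hs
  exact ⟨S, S', h.trans' h1, h2, h3⟩

theorem IStep.teq_right {T U U' : HCTree α} (hs : IStep T U) (h : TEq U U') : IStep T U' := by
  obtain ⟨S, S', h1, h2, h3⟩ := hs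
  exact ⟨S, S', h1, h2, h3.trans' h⟩

theorem IStep.symm' {T U : HCTree α} (h : IStep T U) : IStep U T := by
  obtain ⟨S, S', h1, h2, h3⟩ := h
  exact ⟨S', S, h3.symm', h2.symm', h1.symm'⟩

theorem IStep.fill {T U : HCTree α} (K : Ctx α) (h : IStep T U) :
    IStep (K.fill T) (K.fill U) := by
  obtain ⟨S, S', h1, h2, h3⟩ := h
  exact ⟨K.fill S, K.fill S', h1.fill K, h2.fill K, h3.fill K⟩

theorem IStep.of_interchange {T U : HCTree α} (h : Interchange T U) : IStep T U :=
  ⟨T, U, .rfl, h, .rfl⟩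

/-- `k`-step reachability (up to unordered-tree equality). -/
inductive StepsTo : HCTree α → HCTree α → ℕ → Prop
  | base {T T' : HCTree α} : TEq T T' → StepsTo T T' 0
  | cons {T T'' T' : HCTree α} {k : ℕ} :
      IStep T T'' → StepsTo T'' T' k → StepsTo T T' (k + 1)

theorem StepsTo.teq_left {T T' U : HCTree α} {k : ℕ} (h : TEq T T')
    (hs : StepsTo T' U k) : StepsTo T U k := by
  cases hs with
  | base h2 => exact .base (h.trans' h2)
  | cons h2 h3 => exact .cons (h2.teq_left h) h3

theorem StepsTo.teq_right {T U U' : HCTree α} {k : ℕ} (hs : StepsTo T U k)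
    (h : TEq U U') : StepsTo T U' k := by
  induction hs with
  | base h2 => exact .base (h2.trans' h)
  | cons h2 _ ih => exact .cons h2 (ih h)

theorem StepsTo.trans {T U V : HCTree α} {j k : ℕ} (h1 : StepsTo T U j)
    (h2 : StepsTo U V k) : StepsTo T V (j + k) := by
  induction h1 with
  | base h => simpa using h2.teq_left h
  | @cons T T'' U j' h h' ih =>
    have := StepsTo.cons h (ih h2)
    simpa [Nat.add_right_comm] using this

theorem StepsTo.snoc {T U V : HCTree α} {k : ℕ} (h1 : StepsTo T U k) (h2 : IStep U V) :
    StepsTo T V (k + 1) := by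
  induction h1 with
  | base h => exact .cons (h2.teq_left h) (.base .rfl)
  | cons h h' ih => exact .cons h (ih h2)

theorem StepsTo.symm' {T U : HCTree α} {k : ℕ} (h : StepsTo T U k) : StepsTo U T k := by
  induction h with
  | base h => exact .base h.symm'
  | cons h h' ih => exact ih.snoc h.symm'

theorem StepsTo.fill {T U : HCTree α} {k : ℕ} (K : Ctx α) (h : StepsTo T U k) :
    StepsTo (K.fill T) (K.fill U) k := by
  induction h with
  | base h => exact .base (h.fill K)
  | cons h h' ih => exact .cons (h.fill K) ih

theorem idist_le_of_stepsTo {T U : HCTree α} {k : ℕ} (h : StepsTo T U k) :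
    idist T U ≤ k := by
  apply Nat.sInf_le
  induction h with
  | @base T T' h => exact ⟨fun _ => T, rfl, h, by omega⟩
  | @cons T T'' T' k h h' ih =>
    obtain ⟨f, hf0, hfk, hfs⟩ := ih
    refine ⟨fun i => match i with | 0 => T | i + 1 => f i, rfl, hfk, ?_⟩
    intro i hi
    match i with
    | 0 => simpa [hf0] using h
    | i + 1 => exact hfs i (by omega)

section Cat
variable [LinearOrder α] [Inhabited α]

/-- Caterpillar with head `a` (shallowest leaf) and remaining leaves `l` (deeper). -/
def cat (a : α) : List α → HCTree α
  | [] => leaf a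
  | b :: l => HCTree.node (cat b l) (leaf a)

/-- Caterpillar of a (nonempty) list. -/
def catL : List α → HCTree α
  | [] => leaf default
  | a :: l => cat a l

theorem catL_cons_ne_nil (a : α) {M : List α} (h : M ≠ []) :
    catL (a :: M) = HCTree.node (catL M) (leaf a) := by
  match M with
  | m :: M' => rfl

/-- Merge of two lists, popping the larger head first (descending merge). -/
def mergeL : List α → List α → List α
  | [], Y => Y
  | X, [] => X
  | a :: X, b :: Y =>
    if b ≤ a then a :: mergeL X (b :: Y) else b :: mergeL (a :: X) Y
termination_by X Y => X.length + Y.length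

theorem mergeL_ne_nil {X Y : List α} (h : X ≠ []) : mergeL X Y ≠ [] := by
  match X, Y with
  | a :: X, [] => simp [mergeL]
  | a :: X, b :: Y =>
    rw [mergeL]
    split <;> simp

theorem mergeL_nil_left (Y : List α) : mergeL [] Y = Y := by cases Y <;> rw [mergeL]

theorem mergeL_perm : ∀ (X Y : List α), List.Perm (mergeL X Y) (X ++ Y)
  | [], Y => by simp [mergeL_nil_left]
  | a :: X, [] => by simp [mergeL]
  | a :: X, b :: Y => by
    rw [mergeL]
    split
    · exact (mergeL_perm X (b :: Y)).cons a
    · exact ((mergeL_perm (a :: X) Y).cons b).trans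
        (List.perm_middle (a := b) (l₁ := a :: X) (l₂ := Y)).symm
termination_by X Y => X.length + Y.length

theorem mergeL_sorted : ∀ {X Y : List α}, X.Pairwise (· ≥ ·) → Y.Pairwise (· ≥ ·) →
    (mergeL X Y).Pairwise (· ≥ ·)
  | [], Y, _, hY => by simpa [mergeL_nil_left] using hY
  | a :: X, [], hX, _ => by simpa [mergeL] using hX
  | a :: X, b :: Y, hX, hY => by
    rw [mergeL]
    rw [List.pairwise_cons] at hX hY
    split
    · rename_i hba
      refine List.pairwise_cons.2 ⟨?_, mergeL_sorted hX.2 (List.pairwise_cons.2 hY)⟩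
      intro c hc
      have := (mergeL_perm X (b :: Y)).mem_iff.1 hc
      simp only [List.mem_append, List.mem_cons] at this
      rcases this with h | h | h
      · exact hX.1 c h
      · exact h ▸ hba
      · exact le_trans (hY.1 c h) hba
    · rename_i hba
      have hab : a ≤ b := le_of_not_ge hba
      refine List.pairwise_cons.2 ⟨?_, mergeL_sorted (List.pairwise_cons.2 hX) hY.2⟩
      intro c hc
      have := (mergeL_perm (a :: X) Y).mem_iff.1 hc
      simp only [List.mem_append, List.mem_cons] at this
      rcases this with (h | h) | h
      · exact h ▸ hab
      · exact le_trans (hX.1 c h) hab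
      · exact hY.1 c h
termination_by X Y => X.length + Y.length

/-- One interchange: swap `B` with `C` at the root. -/
theorem istep_swapBC (A B C : HCTree α) :
    IStep (HCTree.node (HCTree.node A B) C) (HCTree.node (HCTree.node A C) B) :=
  IStep.of_interchange ⟨Ctx.hole, A, B, C, rfl, Or.inl rfl⟩

/-- The merge procedure: `node (cat a X) (cat b Y)` can be transformed into the
caterpillar of the merged list using at most `|X| + |Y|` interchanges. -/
theorem mergeSteps : ∀ (a b : α) (X Y : List α),
    ∃ k ≤ X.length + Y.length,
      StepsTo (HCTree.node (cat a X) (cat b Y)) (catL (mergeL (a :: X) (b :: Y))) k := by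
  intro a b X Y
  by_cases hba : b ≤ a
  · match X with
    | [] =>
      refine ⟨0, by omega, .base ?_⟩
      show TEq (HCTree.node (leaf a) (cat b Y)) (catL (mergeL [a] (b :: Y)))
      have : mergeL [a] (b :: Y) = a :: b :: Y := by rw [mergeL]; simp [hba, mergeL_nil_left]
      rw [this]
      exact TEq.swap_children
    | x :: X' =>
      obtain ⟨k', hk', hs⟩ := mergeSteps x b X' Y
      refine ⟨k' + 1, by simp; omega, ?_⟩
      have step1 : IStep (HCTree.node (cat a (x :: X')) (cat b Y))
          (HCTree.node (HCTree.node (cat x X') (cat b Y)) (leaf a)) :=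
        istep_swapBC (cat x X') (leaf a) (cat b Y)
      have lift := hs.fill (Ctx.nodeL Ctx.hole (leaf a))
      simp only [Ctx.fill] at lift
      have : StepsTo (HCTree.node (cat a (x :: X')) (cat b Y))
          (HCTree.node (catL (mergeL (x :: X') (b :: Y))) (leaf a)) (k' + 1) := by
        refine .cons step1 lift
      rw [show mergeL (a :: x :: X') (b :: Y) = a :: mergeL (x :: X') (b :: Y) by
        rw [mergeL]; simp [hba]]
      rwa [catL_cons_ne_nil a (mergeL_ne_nil (by simp))]
  · match Y with
    | [] =>
      refine ⟨0, by omega, .base ?_⟩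
      show TEq (HCTree.node (cat a X) (leaf b)) (catL (mergeL (a :: X) [b]))
      have : mergeL (a :: X) [b] = b :: a :: X := by
        rw [mergeL]; simp [hba, mergeL]
      rw [this]
      show TEq (HCTree.node (cat a X) (leaf b)) (cat b (a :: X))
      exact TEq.rfl
    | y :: Y' =>
      obtain ⟨k', hk', hs⟩ := mergeSteps a y X Y'
      refine ⟨k' + 1, by simp; omega, ?_⟩
      have step1 : IStep (HCTree.node (cat a X) (cat b (y :: Y')))
          (HCTree.node (HCTree.node (cat y Y') (cat a X)) (leaf b)) := by
        refine IStep.teq_left (TEq.swap_children) ?_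
        exact istep_swapBC (cat y Y') (leaf b) (cat a X)
      have hs' := hs.teq_left (TEq.swap_children (l := cat y Y') (r := cat a X))
      have lift := hs'.fill (Ctx.nodeL Ctx.hole (leaf b))
      simp only [Ctx.fill] at lift
      have : StepsTo (HCTree.node (cat a X) (cat b (y :: Y')))
          (HCTree.node (catL (mergeL (a :: X) (y :: Y'))) (leaf b)) (k' + 1) :=
        .cons step1 lift
      rw [show mergeL (a :: X) (b :: y :: Y') = b :: mergeL (a :: X) (y :: Y') by
        rw [mergeL]; simp [hba]]
      rwa [catL_cons_ne_nil b (mergeL_ne_nil (by simp))]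
termination_by a b X Y => X.length + Y.length

/-- Splitting a caterpillar: `cat(a :: X ++ Y) → node (cat (a::X)) (cat Y)`
in at most `|X|` interchanges. -/
theorem splitSteps : ∀ (X : List α) (a : α) (Y : List α), Y ≠ [] →
    ∃ k ≤ X.length,
      StepsTo (catL (a :: (X ++ Y))) (HCTree.node (catL (a :: X)) (catL Y)) k := by
  intro X
  induction X with
  | nil =>
    intro a Y hY
    match Y with
    | b :: Y' =>
      exact ⟨0, le_rfl, .base TEq.swap_children⟩
  | cons x X' ih =>
    intro a Y hY
    obtain ⟨k', hk', hs⟩ := ih x Y hY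
    refine ⟨k' + 1, by simp; omega, ?_⟩
    have lift := hs.fill (Ctx.nodeL Ctx.hole (leaf a))
    simp only [Ctx.fill] at lift
    have step1 : IStep (HCTree.node (HCTree.node (catL (x :: X')) (catL Y)) (leaf a))
        (HCTree.node (HCTree.node (catL (x :: X')) (leaf a)) (catL Y)) :=
      istep_swapBC (catL (x :: X')) (catL Y) (leaf a)
    have start : catL (a :: (x :: X' ++ Y)) =
        HCTree.node (catL (x :: (X' ++ Y))) (leaf a) := rfl
    rw [start]
    have : StepsTo (HCTree.node (catL (x :: (X' ++ Y))) (leaf a))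
        (HCTree.node (HCTree.node (catL (x :: X')) (leaf a)) (catL Y)) (k' + 1) :=
      lift.snoc step1
    exact this

/-- Merge sort (descending). -/
def msort (l : List α) : List α :=
  if h : l.length ≤ 1 then l
  else mergeL (msort (l.take (l.length / 2))) (msort (l.drop (l.length / 2)))
termination_by l.length
decreasing_by
  · simp only [List.length_take]; omega
  · simp only [List.length_drop]; omega

theorem msort_perm : ∀ l : List α, List.Perm (msort l) l := by
  intro l
  rw [msort]
  split
  · exact List.Perm.refl l
  · have h := (mergeL_perm (msort (l.take (l.length / 2))) (msort (l.drop (l.length / 2)))).trans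
      ((msort_perm (l.take (l.length / 2))).append (msort_perm (l.drop (l.length / 2))))
    rwa [List.take_append_drop] at h
termination_by l => l.length
decreasing_by
  · simp only [List.length_take]; omega
  · simp only [List.length_drop]; omega

theorem msort_sorted : ∀ l : List α, (msort l).Pairwise (· ≥ ·) := by
  intro l
  rw [msort]
  split
  · rename_i h
    match l, h with
    | [], _ => exact List.Pairwise.nil
    | [a], _ => exact List.pairwise_singleton _ a
  · exact mergeL_sorted (msort_sorted _) (msort_sorted _)
termination_by l => l.length
decreasing_by
  · simp only [List.length_take]; omega
  · simp only [List.length_drop]; omega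

theorem msort_ne_nil {l : List α} (h : l ≠ []) : msort l ≠ [] := by
  intro hc
  have hlen := (msort_perm l).length_eq
  rw [hc] at hlen
  simp only [List.length_nil] at hlen
  exact h (List.length_eq_zero_iff.1 hlen.symm)

/-- Numeric fact for the flatten recursion. -/
theorem num1 (a b : ℕ) (ha : 1 ≤ a) (hab : a ≤ b) :
    (a : ℝ) + a * Real.logb 2 a + b * Real.logb 2 b
      ≤ ((a : ℝ) + b) * Real.logb 2 ((a : ℝ) + b) := by
  have ha' : (1 : ℝ) ≤ a := by exact_mod_cast ha
  have hb' : (a : ℝ) ≤ b := by exact_mod_cast hab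
  have hb1 : (1 : ℝ) ≤ b := le_trans ha' hb'
  have h2a : (2 : ℝ) * a ≤ a + b := by linarith
  have hlog2a : Real.logb 2 (2 * a) = 1 + Real.logb 2 a := by
    rw [Real.logb_mul (by norm_num) (by positivity)]
    simp [Real.logb_self_eq_one]
  have h1 : Real.logb 2 (2 * a) ≤ Real.logb 2 ((a : ℝ) + b) :=
    Real.logb_le_logb_of_le (by norm_num) (by positivity) h2a
  have h2 : Real.logb 2 (b : ℝ) ≤ Real.logb 2 ((a : ℝ) + b) :=
    Real.logb_le_logb_of_le (by norm_num) (by linarith) (by linarith)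
  have h3 : (a : ℝ) + a * Real.logb 2 a = a * Real.logb 2 (2 * a) := by
    rw [hlog2a]; ring
  have ha0 : (0 : ℝ) ≤ a := by linarith
  have hb0 : (0 : ℝ) ≤ b := by linarith
  calc (a : ℝ) + a * Real.logb 2 a + b * Real.logb 2 b
      = a * Real.logb 2 (2 * a) + b * Real.logb 2 b := by rw [h3]
    _ ≤ a * Real.logb 2 ((a : ℝ) + b) + b * Real.logb 2 ((a : ℝ) + b) := by
        gcongr
    _ = ((a : ℝ) + b) * Real.logb 2 ((a : ℝ) + b) := by ring

theorem logb_three_halves : (3 : ℝ) / 8 ≤ Real.logb 2 (3 / 2) := by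
  have h1 : (0:ℝ) < Real.log 2 := Real.log_pos (by norm_num)
  have h2 : Real.log ((2:ℝ) ^ (3:ℕ)) ≤ Real.log (((3:ℝ)/2) ^ (8:ℕ)) := by
    apply Real.log_le_log (by positivity)
    norm_num
  rw [Real.log_pow, Real.log_pow] at h2
  push_cast at h2
  rw [Real.logb, le_div_iff₀ h1]
  linarith

/-- Numeric fact for the sorting recursion. -/
theorem num2 (m : ℕ) (hm : 2 ≤ m) :
    ((m / 2 : ℕ) : ℝ) + m + 4 * ((m / 2 : ℕ) : ℝ) * Real.logb 2 ((m / 2 : ℕ) : ℝ)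
      + 4 * ((m - m / 2 : ℕ) : ℝ) * Real.logb 2 ((m - m / 2 : ℕ) : ℝ)
      ≤ 4 * m * Real.logb 2 m := by
  set a : ℕ := m / 2 with hadef
  set b : ℕ := m - m / 2 with hbdef
  have hfacts : 1 ≤ a ∧ 1 ≤ b ∧ a + b = m ∧ 3 * a ≤ 2 * m ∧ 3 * b ≤ 2 * m ∧ 2 * a ≤ m := by
    constructor; · omega
    constructor; · omega
    constructor; · omega
    constructor; · omega
    constructor; · omega
    omega
  obtain ⟨ha1, hb1, habm, h3a, h3b, h2a⟩ := hfacts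
  have ha1' : (1:ℝ) ≤ a := by exact_mod_cast ha1
  have hb1' : (1:ℝ) ≤ b := by exact_mod_cast hb1
  have hm1' : (1:ℝ) ≤ m := by exact_mod_cast (by omega : 1 ≤ m)
  have h3a' : 3 * (a:ℝ) ≤ 2 * m := by exact_mod_cast h3a
  have h3b' : 3 * (b:ℝ) ≤ 2 * m := by exact_mod_cast h3b
  have h2a' : 2 * (a:ℝ) ≤ m := by exact_mod_cast h2a
  have habm' : (a:ℝ) + b = m := by exact_mod_cast habm
  have hkey : ∀ x : ℝ, 1 ≤ x → 3 * x ≤ 2 * m →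
      Real.logb 2 x ≤ Real.logb 2 m - Real.logb 2 (3/2) := by
    intro x hx h3x
    have h1 : Real.logb 2 x ≤ Real.logb 2 ((2/3) * m) :=
      Real.logb_le_logb_of_le (by norm_num) (by linarith) (by linarith)
    have h2 : Real.logb 2 ((2/3 : ℝ) * m) = Real.logb 2 (2/3) + Real.logb 2 m := by
      rw [Real.logb_mul (by norm_num) (by positivity)]
    have h3 : Real.logb 2 ((2:ℝ)/3) = - Real.logb 2 (3/2) := by
      rw [show ((2:ℝ)/3) = ((3:ℝ)/2)⁻¹ by norm_num, Real.logb_inv]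
    linarith
  have hA := hkey a ha1' h3a'
  have hB := hkey b hb1' h3b'
  have hL32 := logb_three_halves
  have hmono1 : 4 * (a:ℝ) * Real.logb 2 a ≤ 4 * a * (Real.logb 2 m - Real.logb 2 (3/2)) := by
    have : (0:ℝ) ≤ 4 * a := by linarith
    nlinarith
  have hmono2 : 4 * (b:ℝ) * Real.logb 2 b ≤ 4 * b * (Real.logb 2 m - Real.logb 2 (3/2)) := by
    nlinarith
  have hsum : 4 * (a:ℝ) * (Real.logb 2 m - Real.logb 2 (3/2))
      + 4 * (b:ℝ) * (Real.logb 2 m - Real.logb 2 (3/2))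
      = 4 * (m:ℝ) * Real.logb 2 m - 4 * m * Real.logb 2 (3/2) := by
    rw [← habm']; ring
  have hfin : (3/2 : ℝ) * m ≤ 4 * (m:ℝ) * Real.logb 2 (3/2) := by
    nlinarith
  linarith

/-- Sorting a caterpillar by interchanges: at most `4 m log₂ m` moves. -/
theorem msortSteps : ∀ L : List α, L ≠ [] →
    ∃ k : ℕ, (k : ℝ) ≤ 4 * L.length * Real.logb 2 L.length ∧
      StepsTo (catL L) (catL (msort L)) k := by
  intro L hL
  by_cases h1 : L.length ≤ 1
  · refine ⟨0, ?_, ?_⟩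
    · match L, hL, h1 with
      | [a], _, _ => simp
    · rw [msort]; simp only [h1, dif_pos]; exact .base TEq.rfl
  · have hm : 2 ≤ L.length := by omega
    obtain ⟨X, Y, hXY, hXlen, hYlen⟩ :
        ∃ X Y : List α, X ++ Y = L ∧ X.length = L.length / 2 ∧
          Y.length = L.length - L.length / 2 := by
      refine ⟨L.take (L.length / 2), L.drop (L.length / 2), List.take_append_drop _ L, ?_, ?_⟩
      · simp only [List.length_take]; omega
      · simp only [List.length_drop]
    have hYne : Y ≠ [] := by
      intro hc; rw [hc] at hYlen; simp only [List.length_nil] at hYlen; omega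
    have hXne : X ≠ [] := by
      intro hc; rw [hc] at hXlen; simp only [List.length_nil] at hXlen; omega
    obtain ⟨a, X', rfl⟩ : ∃ a X', X = a :: X' := by
      match X, hXne with
      | a :: X', _ => exact ⟨a, X', rfl⟩
    -- recover take/drop forms
    have hXeq : L.take (L.length / 2) = a :: X' := by
      rw [← hXlen, ← hXY, List.take_left]
    have hYeq : L.drop (L.length / 2) = Y := by
      rw [← hXlen, ← hXY, List.drop_left]
    -- split
    obtain ⟨k0, hk0, s0⟩ := splitSteps X' a Y hYne
    -- recurse
    obtain ⟨k1, hk1, s1⟩ := msortSteps (a :: X') (by simp)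
    obtain ⟨k2, hk2, s2⟩ := msortSteps Y hYne
    -- merge
    obtain ⟨c, M, hcM⟩ : ∃ c M, msort (a :: X') = c :: M := by
      match h : msort (a :: X'), msort_ne_nil (l := a :: X') (by simp) with
      | c :: M, _ => exact ⟨c, M, rfl⟩
    obtain ⟨d, N, hdN⟩ : ∃ d N, msort Y = d :: N := by
      match h : msort Y, msort_ne_nil hYne with
      | d :: N, _ => exact ⟨d, N, rfl⟩
    obtain ⟨k3, hk3, s3⟩ := mergeSteps c d M N
    -- assemble the steps
    have start : catL L = catL (a :: (X' ++ Y)) := by rw [← hXY]; rfl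
    have lift1 := s1.fill (Ctx.nodeL Ctx.hole (catL Y))
    have lift2 := s2.fill (Ctx.nodeR (catL (msort (a :: X'))) Ctx.hole)
    simp only [Ctx.fill] at lift1 lift2
    have smerge : StepsTo (HCTree.node (catL (msort (a :: X'))) (catL (msort Y)))
        (catL (mergeL (msort (a :: X')) (msort Y))) k3 := by
      rw [hcM, hdN]; exact s3
    have hfinal : msort L = mergeL (msort (a :: X')) (msort Y) := by
      conv_lhs => rw [msort]
      rw [dif_neg (by omega), hXeq, hYeq]
    have stotal : StepsTo (catL L) (catL (msort L)) (k0 + k1 + k2 + k3) := by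
      rw [start, hfinal]
      exact ((s0.trans lift1).trans lift2).trans smerge
    refine ⟨k0 + k1 + k2 + k3, ?_, stotal⟩
    -- the numeric bound
    have hXlen' : X'.length + 1 = L.length / 2 := by
      simpa using hXlen
    have hMlen : M.length + 1 = L.length / 2 := by
      have hp := (msort_perm (a :: X')).length_eq
      rw [hcM] at hp
      simp only [List.length_cons] at hp
      omega
    have hNlen : N.length + 1 = L.length - L.length / 2 := by
      have hp := (msort_perm Y).length_eq
      rw [hdN] at hp
      simp only [List.length_cons] at hp
      omega
    have hb1 : (k1 : ℝ) ≤ 4 * ((L.length / 2 : ℕ) : ℝ) * Real.logb 2 ((L.length / 2 : ℕ) : ℝ) := by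
      have h : ((a :: X').length : ℕ) = (L.length / 2 : ℕ) := by
        simp only [List.length_cons]; omega
      rw [h] at hk1
      exact_mod_cast hk1
    have hb2 : (k2 : ℝ) ≤ 4 * ((L.length - L.length / 2 : ℕ) : ℝ)
        * Real.logb 2 ((L.length - L.length / 2 : ℕ) : ℝ) := by
      rw [hYlen] at hk2
      exact_mod_cast hk2
    have hnum := num2 L.length hm
    have hk03 : k0 + k3 ≤ L.length / 2 + L.length := by omega
    have hk03' : ((k0 : ℝ) + k3) ≤ ((L.length / 2 : ℕ) : ℝ) + L.length := by
      have := (Nat.cast_le (α := ℝ)).2 hk03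
      push_cast at this ⊢
      linarith
    push_cast
    push_cast at hb1 hb2 hnum hk03'
    linarith
termination_by L => L.length
decreasing_by
  · simp only [List.length_cons] at hXlen ⊢; omega
  · omega

/-- Concatenating two caterpillars (reverse of splitting). -/
theorem concatSteps (X Y : List α) (hX : X ≠ []) (hY : Y ≠ []) :
    ∃ k ≤ X.length, StepsTo (HCTree.node (catL X) (catL Y)) (catL (X ++ Y)) k := by
  match X, hX with
  | a :: X', _ =>
    obtain ⟨k, hk, hs⟩ := splitSteps X' a Y hY
    exact ⟨k, by simpa using Nat.le_succ_of_le hk, hs.symm'⟩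

end Cat

/-- The leaves of a tree, as a list. -/
def leafList : HCTree α → List α
  | leaf a => [a]
  | HCTree.node l r => leafList l ++ leafList r

theorem leafList_ne_nil (T : HCTree α) : T.leafList ≠ [] := by
  induction T with
  | leaf a => simp [leafList]
  | node l r ihl ihr => simp [leafList, ihl]

theorem leaves_eq_toFinset (T : HCTree α) : T.leaves = T.leafList.toFinset := by
  induction T with
  | leaf a => simp [leaves, leafList]
  | node l r ihl ihr => simp [leaves, leafList, ihl, ihr]

theorem Proper.leafList_nodup {T : HCTree α} (h : T.Proper) : T.leafList.Nodup := by
  induction T with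
  | leaf a => simp [leafList]
  | node l r ihl ihr =>
    obtain ⟨hl, hr, hd⟩ := h
    refine List.Nodup.append (ihl hl) (ihr hr) ?_
    intro x hx hx'
    rw [leaves_eq_toFinset, leaves_eq_toFinset] at hd
    exact Finset.disjoint_left.1 hd (List.mem_toFinset.2 hx) (List.mem_toFinset.2 hx')

section Flatten
variable [LinearOrder α] [Inhabited α]

/-- Flattening a tree into a caterpillar: at most `m log₂ m` moves. -/
theorem flattenSteps (T : HCTree α) :
    ∃ L : List α, List.Perm L T.leafList ∧
      ∃ k : ℕ, (k : ℝ) ≤ T.leafList.length * Real.logb 2 T.leafList.length ∧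
        StepsTo T (catL L) k := by
  induction T with
  | leaf a =>
    exact ⟨[a], List.Perm.refl _, 0, by simp [leafList], .base TEq.rfl⟩
  | node l r ihl ihr =>
    obtain ⟨Ll, pl, kl, hkl, sl⟩ := ihl
    obtain ⟨Lr, pr, kr, hkr, sr⟩ := ihr
    have hLl : Ll ≠ [] := by
      intro hc
      exact leafList_ne_nil l (List.Perm.nil_eq (hc ▸ pl)).symm
    have hLr : Lr ≠ [] := by
      intro hc
      exact leafList_ne_nil r (List.Perm.nil_eq (hc ▸ pr)).symm
    have liftl := sl.fill (Ctx.nodeL Ctx.hole r)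
    have liftr := sr.fill (Ctx.nodeR (catL Ll) Ctx.hole)
    simp only [Ctx.fill] at liftl liftr
    have s2 : StepsTo (HCTree.node l r) (HCTree.node (catL Ll) (catL Lr)) (kl + kr) :=
      liftl.trans liftr
    have halen : Ll.length = l.leafList.length := pl.length_eq
    have hblen : Lr.length = r.leafList.length := pr.length_eq
    have ha1 : 1 ≤ l.leafList.length := List.length_pos_iff.2 (leafList_ne_nil l)
    have hb1 : 1 ≤ r.leafList.length := List.length_pos_iff.2 (leafList_ne_nil r)
    have htot : (leafList (HCTree.node l r)).length
        = l.leafList.length + r.leafList.length := by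
      simp [leafList]
    by_cases hab : Ll.length ≤ Lr.length
    · obtain ⟨k0, hk0, s0⟩ := concatSteps Ll Lr hLl hLr
      refine ⟨Ll ++ Lr, by simpa [leafList] using pl.append pr,
        kl + kr + k0, ?_, s2.trans s0⟩
      rw [htot]
      have := num1 l.leafList.length r.leafList.length ha1 (by omega)
      have hc0 : (k0 : ℝ) ≤ l.leafList.length := by
        rw [← halen]; exact_mod_cast hk0
      push_cast
      push_cast at hkl hkr this hc0
      linarith
    · obtain ⟨k0, hk0, s0⟩ := concatSteps Lr Ll hLr hLl
      have s0' : StepsTo (HCTree.node (catL Ll) (catL Lr)) (catL (Lr ++ Ll)) k0 :=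
        s0.teq_left TEq.swap_children
      refine ⟨Lr ++ Ll, ?_, kl + kr + k0, ?_, s2.trans s0'⟩
      · exact List.perm_append_comm.trans (by simpa [leafList] using pl.append pr)
      rw [htot]
      have := num1 r.leafList.length l.leafList.length hb1 (by omega)
      have hcomm : ((r.leafList.length : ℝ) + l.leafList.length)
          = ((l.leafList.length : ℝ) + r.leafList.length) := by ring
      rw [hcomm] at this
      have hc0 : (k0 : ℝ) ≤ r.leafList.length := by
        rw [← hblen]; exact_mod_cast hk0
      push_cast
      push_cast at hkl hkr this hc0
      linarith

end Flatten

end HCTree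

open HCTree in
/-- there is a constant `c > 0` such that the interchange distance
between any two HC trees of order `n ≥ 2` is at most `c · n · log n`. -/
theorem idist_le_n_log_n :
    ∃ c : ℝ, 0 < c ∧ ∀ n : ℕ, 2 ≤ n → ∀ T₁ T₂ : HCTree (Fin n),
      T₁.Proper → T₁.leaves = Finset.univ → T₂.Proper → T₂.leaves = Finset.univ →
      (idist T₁ T₂ : ℝ) ≤ c * (n : ℝ) * Real.log (n : ℝ) := by
  have hlog2 : 0 < Real.log 2 := Real.log_pos (by norm_num)
  refine ⟨10 / Real.log 2, div_pos (by norm_num) hlog2, ?_⟩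
  intro n hn T₁ T₂ h1p h1u h2p h2u
  haveI : Inhabited (Fin n) := ⟨⟨0, by omega⟩⟩
  have hlen : ∀ T : HCTree (Fin n), T.Proper → T.leaves = Finset.univ →
      T.leafList.length = n := by
    intro T hp hu
    have h1 := leaves_eq_toFinset T
    rw [hu] at h1
    have hcard : T.leafList.toFinset.card = T.leafList.length :=
      List.toFinset_card_of_nodup hp.leafList_nodup
    rw [← h1] at hcard
    simpa using hcard.symm
  have hn1 := hlen T₁ h1p h1u
  have hn2 := hlen T₂ h2p h2u
  obtain ⟨L₁, p₁, k₁, hk₁, s₁⟩ := flattenSteps T₁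
  obtain ⟨L₂, p₂, k₂, hk₂, s₂⟩ := flattenSteps T₂
  have hL₁ : L₁ ≠ [] := fun hc => leafList_ne_nil T₁ (List.Perm.nil_eq (hc ▸ p₁)).symm
  have hL₂ : L₂ ≠ [] := fun hc => leafList_ne_nil T₂ (List.Perm.nil_eq (hc ▸ p₂)).symm
  obtain ⟨k₁', hk₁', s₁'⟩ := msortSteps L₁ hL₁
  obtain ⟨k₂', hk₂', s₂'⟩ := msortSteps L₂ hL₂
  -- both sorted caterpillars coincide
  have hpermT : List.Perm T₁.leafList T₂.leafList := by
    refine List.perm_of_nodup_nodup_toFinset_eq h1p.leafList_nodup h2p.leafList_nodup ?_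
    rw [← leaves_eq_toFinset, ← leaves_eq_toFinset, h1u, h2u]
  have hperm : List.Perm (msort L₁) (msort L₂) :=
    ((((msort_perm L₁).trans p₁).trans hpermT).trans p₂.symm).trans (msort_perm L₂).symm
  haveI : IsAntisymm (Fin n) (· ≥ ·) := ⟨fun a b h1 h2 => le_antisymm h2 h1⟩
  have heq : msort L₁ = msort L₂ :=
    List.Perm.eq_of_pairwise' (msort_sorted L₁) (msort_sorted L₂) hperm
  -- assemble
  have sback : StepsTo (catL (msort L₁)) T₂ (k₂ + k₂') := by
    rw [heq]
    exact (s₂.trans s₂').symm'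
  have stotal : StepsTo T₁ T₂ (k₁ + k₁' + (k₂ + k₂')) := (s₁.trans s₁').trans sback
  have hid := idist_le_of_stepsTo stotal
  -- numeric bound
  have hl1 : L₁.length = n := p₁.length_eq.trans hn1
  have hl2 : L₂.length = n := p₂.length_eq.trans hn2
  rw [hn1] at hk₁
  rw [hn2] at hk₂
  rw [hl1] at hk₁'
  rw [hl2] at hk₂'
  have hcast : (idist T₁ T₂ : ℝ) ≤ ((k₁ + k₁' + (k₂ + k₂') : ℕ) : ℝ) := by
    exact_mod_cast hid
  have hbound : ((k₁ + k₁' + (k₂ + k₂') : ℕ) : ℝ) ≤ 10 * n * Real.logb 2 n := by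
    push_cast
    linarith
  have hfinal : 10 * (n : ℝ) * Real.logb 2 n = 10 / Real.log 2 * n * Real.log n := by
    rw [Real.logb]
    ring
  linarith
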